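/- For all integers m \ge 0 and n \ge 1, S_{2m+1,n}(q) = \sum_{k=0}^{m} (-1)^{m-k} \frac{[k]!}{[m+1]!} P_{m,m-k}(q) \, q^{(m-k)n} \frac{([n][n+1])^{k+1}}{[2]} in \mathbb{Q}(q), where P_{m,j} = \det( h_{m-j-i+2l-1}(\{1,q\}^{i-l+2}) )_{i,l \in \{0,\dots,j-1\}}. -/

import Mathlib

open Finset

/-- The `q`-integer `[n] = (1-q^n)/(1-q)` in `ℚ(q)`. -/
noncomputable def qint (n : ℕ) : RatFunc ℚ :=
  (1 - RatFunc.X ^ n) / (1 - RatFunc.X)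

/-- The `q`-factorial `[m]! = ∏_{i=1}^m [i]`. -/
noncomputable def qfact (m : ℕ) : RatFunc ℚ := ∏ i ∈ Icc 1 m, qint i

/-- `h_j({1,q}^r)`: the complete homogeneous symmetric polynomial of degree `j` in `2r`
variables, `r` specialized to `q` and `r` to `1`; it vanishes for `j < 0`, or for `r ≤ 0`
with `j > 0`, and `h_0 = 1`. -/
noncomputable def hgen (j r : ℤ) : RatFunc ℚ :=
  if 0 ≤ j ∧ 0 < r then
    ∑ i ∈ range (j.toNat + 1),
      (((r - 1).toNat + i).choose (r - 1).toNat : RatFunc ℚ) *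
        ((j.toNat + (r - 1).toNat - i).choose (r - 1).toNat : RatFunc ℚ) * RatFunc.X ^ i
  else if j = 0 then 1 else 0

/-- The `q`-Faulhaber polynomial
`P_{m,k} = det( h_{m-k-i+2j-1}({1,q}^{i-j+2}) )_{i,j ∈ {0,…,k-1}}`. -/
noncomputable def P (m k : ℕ) : RatFunc ℚ :=
  Matrix.det (Matrix.of fun i j : Fin k =>
    hgen ((m : ℤ) - k - i + 2 * j - 1) ((i : ℤ) - j + 2))

/-- `S_{m,n}(q) = ∑_{k=1}^n ([2k]/[2]) [k]^{m-1} q^{((m+1)/2)(n-k)}`. -/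
noncomputable def S (m n : ℕ) : RatFunc ℚ :=
  ∑ k ∈ Icc 1 n, (qint (2 * k) / qint 2) * qint k ^ (m - 1) *
    RatFunc.X ^ ((m + 1) / 2 * (n - k))

/-!
Both sides vanish at `n = 0` and satisfy `a (n+1) = q^(m+1) a n + [2(n+1)]/[2] [n+1]^(2m)`; for
the left side this is immediate. On the right put `x = q^n`: since `[n][n+1] = (1-x)(1-qx)/(1-q)^2`,
the sum is a polynomial in `x` divided by a constant, and comparing its values at `x` and `qx`
reduces the recurrence to
`∑_{k ≤ m} (-1)^(m-k) [k]! P_{m,m-k} ((1-q)^2 x)^(m-k) (1-x)^k ((1-qx)^(k+1) - (q-x)^(k+1))`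
`= (1-q)(1+x)(1-x)^(2m) [m+1]!`.

This identity is proved by strong induction on `m`. The matrix of `P_{m,m-k}` is lower Hessenberg
with `q`-integers on the superdiagonal, so expanding it along its last row expresses each term
with `k < m` through the identity for smaller `m`. The remaining term `k = m` is handled by
`(1-x)^m ((1-qx)^(m+1) - (q-x)^(m+1))`
`= (1-q)(1+x) ∑_{s+t=m} h_{t-s}({1,q}^(s+1)) ((1-q)^2 x)^s (1-x)^(2t)`,
as both sides satisfy the same three-term recurrence in `m`; on the right this is the
recurrence `h_d(r+1) = (1+q) h_{d-1}(r+1) - q h_{d-2}(r+1) + h_d(r)`, which holds because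
`h_d({1,q}^r)` is the coefficient of `t^d` in `((1-t)(1-qt))^(-r)`.
-/

open Polynomial in
lemma one_sub_X_pow_ne_zero {n : ℕ} (hn : n ≠ 0) : (1 - RatFunc.X ^ n : RatFunc ℚ) ≠ 0 := by
  have h : (1 - X ^ n : ℚ[X]) ≠ 0 := by
    rw [← neg_sub, neg_ne_zero, ← C_1]
    exact X_pow_sub_C_ne_zero (Nat.pos_of_ne_zero hn) 1
  simpa using (map_ne_zero_iff _ (RatFunc.algebraMap_injective ℚ)).2 h

lemma one_sub_X_ne_zero : (1 - RatFunc.X : RatFunc ℚ) ≠ 0 := by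
  simpa using one_sub_X_pow_ne_zero one_ne_zero

lemma qint_mul_one_sub_X (n : ℕ) : qint n * (1 - RatFunc.X) = 1 - RatFunc.X ^ n :=
  div_mul_cancel₀ _ one_sub_X_ne_zero

lemma qint_eq_sum (n : ℕ) : qint n = ∑ i ∈ range n, RatFunc.X ^ i := by
  rw [qint, div_eq_iff one_sub_X_ne_zero, ← neg_sub (RatFunc.X ^ n), ← neg_sub RatFunc.X,
    mul_neg, geom_sum_mul]

lemma qint_ne_zero {n : ℕ} (hn : n ≠ 0) : qint n ≠ 0 :=
  div_ne_zero (one_sub_X_pow_ne_zero hn) one_sub_X_ne_zero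

lemma qint_mul_qint_succ (n : ℕ) : qint n * qint (n + 1) =
    (1 - RatFunc.X ^ n) * (1 - RatFunc.X * RatFunc.X ^ n) / (1 - RatFunc.X) ^ 2 := by
  rw [qint, qint, pow_succ', div_mul_div_comm, ← sq]

lemma qfact_succ (m : ℕ) : qfact (m + 1) = qfact m * qint (m + 1) :=
  prod_Icc_succ_top (by omega) _

lemma qfact_ne_zero (m : ℕ) : qfact m ≠ 0 :=
  prod_ne_zero_iff.2 fun _ hi => qint_ne_zero (by grind)

lemma qfact_mul_prod_Ico {p m : ℕ} (h : p ≤ m) :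
    qfact p * ∏ t ∈ Ico (p + 1) (m + 1), qint t = qfact m := by
  rw [qfact, qfact, ← Ico_add_one_right_eq_Icc, ← Ico_add_one_right_eq_Icc,
    prod_Ico_consecutive _ (by omega) (by omega)]

section Hessenberg

open Matrix

variable {R : Type*} [CommRing R] {f : ℕ → ℕ → R}

lemma det_skipColumn_of_hessenberg (hf : ∀ i j, i + 2 ≤ j → f i j = 0) {j k : ℕ}
    (hjk : j ≤ k) :
    det (of fun a b : Fin k => f a (if (b : ℕ) < j then b else b + 1)) =
      (∏ t ∈ Ico j k, f t (t + 1)) * det (of fun a b : Fin j => f a b) := by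
  induction k, hjk using Nat.le_induction with
  | base => simp
  | succ k hjk ih =>
    rw [det_succ_column _ (Fin.last k), sum_eq_single (Fin.last k), prod_Ico_succ_top hjk]
    · have hminor :
          (of fun a b : Fin (k + 1) => f a (if (b : ℕ) < j then b else b + 1)).submatrix
            (Fin.last k).succAbove (Fin.last k).succAbove =
          of fun a b : Fin k => f a (if (b : ℕ) < j then b else b + 1) := by
        ext a b
        simp
      simp only [hminor, ih, of_apply, Fin.val_last, if_neg (not_lt.2 hjk), ← two_mul,
        pow_mul, neg_one_sq, one_pow]
      ring
    · intro a _ ha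
      have : (a : ℕ) < k := Fin.lt_last_iff_ne_last.2 ha
      simp [if_neg (not_lt.2 hjk), hf a (k + 1) (by omega)]
    · simp

theorem det_succ_of_hessenberg (hf : ∀ i j, i + 2 ≤ j → f i j = 0) (k : ℕ) :
    det (of fun a b : Fin (k + 1) => f a b) = ∑ j ∈ range (k + 1),
      (-1) ^ (k + j) * f k j * (∏ t ∈ Ico j k, f t (t + 1)) *
        det (of fun a b : Fin j => f a b) := by
  rw [det_succ_row _ (Fin.last k), ← Fin.sum_univ_eq_sum_range]
  refine sum_congr rfl fun j _ => ?_
  have hminor : (of fun a b : Fin (k + 1) => f a b).submatrix (Fin.last k).succAbove j.succAbove =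
      of fun a b : Fin k => f a (if (b : ℕ) < j then b else b + 1) := by
    ext a b
    simp only [submatrix_apply, Fin.succAbove_last, of_apply, Fin.val_castSucc, Fin.succAbove,
      Fin.lt_def]
    split_ifs <;> rfl
  rw [hminor, det_skipColumn_of_hessenberg hf (by omega)]
  simp only [of_apply, Fin.val_last]
  ring

end Hessenberg

section CoeffInt

open PowerSeries

variable {R : Type*} [Semiring R]

noncomputable def coeffInt (d : ℤ) : R⟦X⟧ →ₗ[R] R :=
  if 0 ≤ d then coeff d.toNat else 0

lemma coeffInt_of_nonneg {d : ℤ} (hd : 0 ≤ d) (F : R⟦X⟧) :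
    coeffInt d F = coeff d.toNat F := by
  simp [coeffInt, hd]

lemma coeffInt_of_neg {d : ℤ} (hd : d < 0) (F : R⟦X⟧) : coeffInt d F = 0 := by
  simp [coeffInt, not_le.2 hd]

lemma coeffInt_mul_X (d : ℤ) (F : R⟦X⟧) : coeffInt d (F * X) = coeffInt (d - 1) F := by
  rcases lt_trichotomy d 0 with hd | rfl | hd
  · rw [coeffInt_of_neg hd, coeffInt_of_neg (by omega)]
  · rw [coeffInt_of_nonneg le_rfl, coeffInt_of_neg (by omega)]
    simp
  · rw [coeffInt_of_nonneg hd.le, coeffInt_of_nonneg (by omega),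
      show d.toNat = (d - 1).toNat + 1 by omega, coeff_succ_mul_X]

end CoeffInt

lemma hgen_neg {j : ℤ} (hj : j < 0) (r : ℤ) : hgen j r = 0 := by
  rw [hgen, if_neg (by omega), if_neg (by omega)]

lemma hgen_of_nonpos {j r : ℤ} (hj : j ≠ 0) (hr : r ≤ 0) : hgen j r = 0 := by
  rw [hgen, if_neg (by omega), if_neg hj]

lemma hgen_one (n : ℕ) : hgen n 1 = qint (n + 1) := by
  rw [hgen, if_pos ⟨by omega, by omega⟩, qint_eq_sum]
  simp

lemma hgen_zero_left (r : ℤ) : hgen 0 r = 1 := by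
  simp [hgen]

section HgenSeries

open PowerSeries

noncomputable def hgenSeries : (RatFunc ℚ)⟦X⟧ :=
  rescale RatFunc.X (PowerSeries.mk 1) * PowerSeries.mk 1

lemma hgenSeries_mul : hgenSeries * ((1 - C RatFunc.X * X) * (1 - X)) = 1 := by
  have h : rescale (RatFunc.X : RatFunc ℚ) (PowerSeries.mk 1 * (1 - X)) = 1 := by
    rw [mk_one_mul_one_sub_eq_one, map_one]
  rw [map_mul, map_sub, map_one, rescale_X] at h
  rw [hgenSeries, mul_mul_mul_comm, h, mk_one_mul_one_sub_eq_one, one_mul]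

lemma hgen_eq_coeffInt (d : ℤ) (r : ℕ) : hgen d r = coeffInt d (hgenSeries ^ r) := by
  rcases lt_or_ge d 0 with hd | hd
  · rw [hgen_neg hd, coeffInt_of_neg hd]
  obtain ⟨j, rfl⟩ := Int.eq_ofNat_of_zero_le hd
  cases r with
  | zero =>
    rw [coeffInt_of_nonneg hd, pow_zero, coeff_one, hgen]
    simp
  | succ s =>
    rw [coeffInt_of_nonneg hd, hgenSeries, mul_pow, ← map_pow, mk_one_pow_eq_mk_choose_add,
      coeff_mul, Nat.sum_antidiagonal_eq_sum_range_succ (fun i j => coeff i _ * coeff j _), hgen,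
      if_pos ⟨hd, by omega⟩]
    simp only [coeff_rescale, coeff_mk, Int.toNat_natCast]
    refine sum_congr (by simp) fun i hi => ?_
    rw [show (s + 1 : ℕ) - (1 : ℤ) = s by omega, Int.toNat_natCast,
      show j + s - i = s + (j - i) by grind]
    ring

lemma hgen_succ_right (d : ℤ) (s : ℕ) :
    hgen d ((s : ℤ) + 1) = (1 + RatFunc.X) * hgen (d - 1) ((s : ℤ) + 1)
      - RatFunc.X * hgen (d - 2) ((s : ℤ) + 1) + hgen d s := by
  have h : hgenSeries ^ s = hgenSeries ^ (s + 1)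
      - (1 + RatFunc.X : RatFunc ℚ) • (hgenSeries ^ (s + 1) * X)
      + (RatFunc.X : RatFunc ℚ) • (hgenSeries ^ (s + 1) * X * X) := by
    rw [← mul_one (hgenSeries ^ s), ← hgenSeries_mul, smul_eq_C_mul, smul_eq_C_mul, map_add,
      map_one]
    ring
  rw [show (s : ℤ) + 1 = ((s + 1 : ℕ) : ℤ) by push_cast; rfl]
  simp only [hgen_eq_coeffInt, h, map_add, map_sub, map_smul, coeffInt_mul_X, smul_eq_mul,
    sub_sub, one_add_one_eq_two]
  ring

end HgenSeries

lemma P_zero_right (m : ℕ) : P m 0 = 1 := Matrix.det_fin_zero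

noncomputable def pEntry (D a b : ℕ) : RatFunc ℚ :=
  hgen ((D : ℤ) + 2 * b - a - 1) ((a : ℤ) - b + 2)

lemma pEntry_eq_zero {D a b : ℕ} (h : a + 2 ≤ b) : pEntry D a b = 0 :=
  hgen_of_nonpos (by omega) (by omega)

lemma pEntry_self_succ (D t : ℕ) : pEntry D t (t + 1) = qint (D + t + 2) := by
  rw [pEntry, show (D : ℤ) + 2 * ((t + 1 : ℕ) : ℤ) - t - 1 = ((D + t + 1 : ℕ) : ℤ) by
      push_cast; ring,
    show (t : ℤ) - ((t + 1 : ℕ) : ℤ) + 2 = 1 by push_cast; ring, hgen_one]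

lemma P_add_eq_det (D j : ℕ) :
    P (D + j) j = Matrix.det (Matrix.of fun a b : Fin j => pEntry D a b) := by
  rw [P]
  congr 1
  ext a b
  rw [Matrix.of_apply, Matrix.of_apply, pEntry]
  congr 1
  push_cast
  ring

lemma neg_one_pow_mul_P {k m : ℕ} (hkm : k < m) :
    (-1) ^ (m - k) * P m (m - k) = -∑ p ∈ Ico k m, (-1) ^ (p - k) *
      hgen (2 * p - m) (m - p + 1) * (∏ t ∈ Ico (p + 2) (m + 1), qint t) * P p (p - k) := by
  obtain ⟨K, hK⟩ : ∃ K, m - k = K + 1 := ⟨m - k - 1, by omega⟩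
  obtain rfl : m = k + (K + 1) := by omega
  rw [hK, P_add_eq_det, det_succ_of_hessenberg (fun _ _ => pEntry_eq_zero), sum_Ico_eq_sum_range,
    Nat.add_sub_cancel_left, mul_sum, ← sum_neg_distrib]
  refine sum_congr rfl fun j _ => ?_
  have hentry : pEntry k K j = hgen (2 * ((k + j : ℕ) : ℤ) - ((k + (K + 1) : ℕ) : ℤ))
      (((k + (K + 1) : ℕ) : ℤ) - (k + j : ℕ) + 1) := by
    rw [pEntry]
    congr 1 <;> push_cast <;> ring
  have hprod : ∏ t ∈ Ico j K, pEntry k t (t + 1) =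
      ∏ t ∈ Ico (k + j + 2) (k + (K + 1) + 1), qint t := by
    rw [show k + j + 2 = j + (k + 2) by omega, show k + (K + 1) + 1 = K + (k + 2) by omega,
      ← prod_Ico_add']
    exact prod_congr rfl fun t _ => by rw [pEntry_self_succ]; congr 1; omega
  have hsign : (-1 : RatFunc ℚ) ^ (K + 1) * (-1) ^ (K + j) = -(-1) ^ j := by
    rw [← pow_add, show K + 1 + (K + j) = 2 * K + j + 1 by ring, pow_succ, pow_add, pow_mul]
    simp
  rw [Nat.add_sub_cancel_left, hentry, hprod, ← P_add_eq_det, ← neg_mul,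
    ← neg_mul, ← neg_mul, ← hsign]
  ring

noncomputable def hgenSum (m : ℕ) (x : RatFunc ℚ) : RatFunc ℚ :=
  ∑ p ∈ antidiagonal m, hgen ((p.2 : ℤ) - p.1) ((p.1 : ℤ) + 1) *
    ((1 - RatFunc.X) ^ 2 * x) ^ p.1 * ((1 - x) ^ 2) ^ p.2

lemma hgenSum_add_two (M : ℕ) (x : RatFunc ℚ) :
    hgenSum (M + 2) x = (1 + RatFunc.X) * (1 - x) ^ 2 * hgenSum (M + 1) x
      - (1 - RatFunc.X * x) * (RatFunc.X - x) * (1 - x) ^ 2 * hgenSum M x := by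
  have h1 : (1 - x) ^ 2 * hgenSum (M + 1) x = ∑ p ∈ antidiagonal (M + 2),
      hgen ((p.2 : ℤ) - p.1 - 1) ((p.1 : ℤ) + 1) *
        ((1 - RatFunc.X) ^ 2 * x) ^ p.1 * ((1 - x) ^ 2) ^ p.2 := by
    rw [Nat.sum_antidiagonal_succ', hgen_neg (by omega), hgenSum, mul_sum]
    simp only [zero_mul, zero_add]
    refine sum_congr rfl fun p _ => ?_
    push_cast
    ring_nf
  have h2 : (1 - x) ^ 2 * (1 - x) ^ 2 * hgenSum M x = ∑ p ∈ antidiagonal (M + 2),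
      hgen ((p.2 : ℤ) - p.1 - 2) ((p.1 : ℤ) + 1) *
        ((1 - RatFunc.X) ^ 2 * x) ^ p.1 * ((1 - x) ^ 2) ^ p.2 := by
    rw [Nat.sum_antidiagonal_succ', Nat.sum_antidiagonal_succ', hgen_neg (by omega),
      hgen_neg (by omega), hgenSum, mul_sum]
    simp only [zero_mul, zero_add]
    refine sum_congr rfl fun p _ => ?_
    push_cast
    ring_nf
  have h3 : (1 - RatFunc.X) ^ 2 * x * (1 - x) ^ 2 * hgenSum M x = ∑ p ∈ antidiagonal (M + 2),
      hgen ((p.2 : ℤ) - p.1) (p.1 : ℤ) *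
        ((1 - RatFunc.X) ^ 2 * x) ^ p.1 * ((1 - x) ^ 2) ^ p.2 := by
    rw [Nat.sum_antidiagonal_succ, Nat.sum_antidiagonal_succ',
      hgen_of_nonpos (by omega) (by omega), hgen_neg (by omega), hgenSum, mul_sum]
    simp only [zero_mul, zero_add]
    refine sum_congr rfl fun p _ => ?_
    push_cast
    ring_nf
  rw [show (1 - RatFunc.X * x) * (RatFunc.X - x) * (1 - x) ^ 2 * hgenSum M x =
      RatFunc.X * ((1 - x) ^ 2 * (1 - x) ^ 2 * hgenSum M x)
        - (1 - RatFunc.X) ^ 2 * x * (1 - x) ^ 2 * hgenSum M x by ring,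
    mul_assoc, h1, h2, h3, mul_sum, mul_sum, hgenSum, ← sum_sub_distrib, ← sum_sub_distrib]
  refine sum_congr rfl fun p _ => ?_
  rw [hgen_succ_right]
  ring

lemma one_sub_X_mul_hgenSum (m : ℕ) (x : RatFunc ℚ) :
    (1 - RatFunc.X) * (1 + x) * hgenSum m x =
      (1 - x) ^ m * ((1 - RatFunc.X * x) ^ (m + 1) - (RatFunc.X - x) ^ (m + 1)) := by
  induction m using Nat.twoStepInduction with
  | zero =>
    simp only [hgenSum, Nat.antidiagonal_zero, sum_singleton, Nat.cast_zero, sub_self,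
      hgen_zero_left]
    ring
  | one =>
    have h : hgen 1 1 = 1 + RatFunc.X := by simpa [qint_eq_sum, sum_range_succ] using hgen_one 1
    simp only [hgenSum, Nat.sum_antidiagonal_succ, Nat.antidiagonal_zero, sum_singleton,
      Nat.cast_zero, Nat.cast_one, sub_zero, zero_sub, zero_add, h, hgen_neg neg_one_lt_zero]
    ring
  | more M ih0 ih1 =>
    rw [hgenSum_add_two]
    linear_combination ((1 + RatFunc.X) * (1 - x) ^ 2) * ih1 -
      ((1 - RatFunc.X * x) * (RatFunc.X - x) * (1 - x) ^ 2) * ih0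

lemma hgenSum_eq (m : ℕ) (x : RatFunc ℚ) : hgenSum m x = qint (m + 1) * ((1 - x) ^ 2) ^ m +
    ∑ p ∈ range m, hgen (2 * p - m) (m - p + 1) * ((1 - RatFunc.X) ^ 2 * x) ^ (m - p) *
      ((1 - x) ^ 2) ^ p := by
  rw [hgenSum, ← Nat.sum_antidiagonal_swap, Nat.sum_antidiagonal_eq_sum_range_succ_mk,
    sum_range_succ, add_comm]
  simp only [Prod.swap_prod_mk, Nat.sub_self, CharP.cast_eq_zero, sub_zero, zero_add, pow_zero,
    mul_one, hgen_one]
  congr 1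
  refine sum_congr rfl fun p hp => ?_
  rw [Nat.cast_sub (mem_range.1 hp).le, show (p : ℤ) - (m - p) = 2 * p - m by ring]

noncomputable def faulhaberTerm (m k : ℕ) (x : RatFunc ℚ) : RatFunc ℚ :=
  (-1) ^ (m - k) * qfact k * P m (m - k) * ((1 - RatFunc.X) ^ 2 * x) ^ (m - k) * (1 - x) ^ k *
    ((1 - RatFunc.X * x) ^ (k + 1) - (RatFunc.X - x) ^ (k + 1))

lemma faulhaberTerm_self (m : ℕ) (x : RatFunc ℚ) :
    faulhaberTerm m m x = qfact m * ((1 - RatFunc.X) * (1 + x) * hgenSum m x) := by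
  rw [faulhaberTerm, one_sub_X_mul_hgenSum, Nat.sub_self, P_zero_right]
  ring

lemma faulhaberTerm_of_lt {k m : ℕ} (hkm : k < m) (x : RatFunc ℚ) :
    faulhaberTerm m k x = -∑ p ∈ Ico k m, hgen (2 * p - m) (m - p + 1) *
      (∏ t ∈ Ico (p + 2) (m + 1), qint t) * ((1 - RatFunc.X) ^ 2 * x) ^ (m - p) *
        faulhaberTerm p k x := by
  rw [faulhaberTerm, mul_right_comm _ (qfact k), neg_one_pow_mul_P hkm, neg_mul, neg_mul,
    neg_mul, neg_mul, neg_inj, sum_mul, sum_mul, sum_mul, sum_mul]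
  refine sum_congr rfl fun p hp => ?_
  rw [mem_Ico] at hp
  rw [faulhaberTerm, show m - k = (m - p) + (p - k) by omega, pow_add]
  ring

theorem sum_faulhaberTerm (m : ℕ) (x : RatFunc ℚ) :
    ∑ k ∈ range (m + 1), faulhaberTerm m k x =
      (1 - RatFunc.X) * (1 + x) * ((1 - x) ^ 2) ^ m * qfact (m + 1) := by
  induction m using Nat.strong_induction_on with | _ m ih => ?_
  have hrest : ∑ k ∈ range m, faulhaberTerm m k x = -∑ p ∈ range m,
      hgen (2 * p - m) (m - p + 1) * ((1 - RatFunc.X) ^ 2 * x) ^ (m - p) *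
        (qfact m * ((1 - RatFunc.X) * (1 + x) * ((1 - x) ^ 2) ^ p)) := by
    calc ∑ k ∈ range m, faulhaberTerm m k x
        = -∑ k ∈ range m, ∑ p ∈ Ico k m, hgen (2 * p - m) (m - p + 1) *
            (∏ t ∈ Ico (p + 2) (m + 1), qint t) * ((1 - RatFunc.X) ^ 2 * x) ^ (m - p) *
              faulhaberTerm p k x := by
          rw [← sum_neg_distrib]
          exact sum_congr rfl fun k hk => faulhaberTerm_of_lt (mem_range.1 hk) x
      _ = -∑ p ∈ range m, hgen (2 * p - m) (m - p + 1) *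
            (∏ t ∈ Ico (p + 2) (m + 1), qint t) * ((1 - RatFunc.X) ^ 2 * x) ^ (m - p) *
              ∑ k ∈ range (p + 1), faulhaberTerm p k x := by
          simp only [mul_sum]
          rw [sum_comm' (t' := range m) (s' := fun p => range (p + 1))]
          intro k p
          simp only [mem_range, mem_Ico]
          omega
      _ = _ := by
          congr 1
          refine sum_congr rfl fun p hp => ?_
          rw [ih p (mem_range.1 hp), ← qfact_mul_prod_Ico (mem_range.1 hp)]
          ring
  have hpull : ∑ p ∈ range m, hgen (2 * p - m) (m - p + 1) *
      ((1 - RatFunc.X) ^ 2 * x) ^ (m - p) *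
        (qfact m * ((1 - RatFunc.X) * (1 + x) * ((1 - x) ^ 2) ^ p)) =
      qfact m * ((1 - RatFunc.X) * (1 + x)) * ∑ p ∈ range m, hgen (2 * p - m) (m - p + 1) *
        ((1 - RatFunc.X) ^ 2 * x) ^ (m - p) * ((1 - x) ^ 2) ^ p := by
    rw [mul_sum]
    exact sum_congr rfl fun _ _ => by ring
  rw [sum_range_succ, hrest, faulhaberTerm_self, hgenSum_eq, qfact_succ]
  linear_combination -hpull

noncomputable def faulhaberPoly (m : ℕ) (x : RatFunc ℚ) : RatFunc ℚ :=
  ∑ k ∈ range (m + 1), (-1) ^ (m - k) * qfact k * P m (m - k) *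
    ((1 - RatFunc.X) ^ 2 * x) ^ (m - k) * ((1 - x) * (1 - RatFunc.X * x)) ^ (k + 1)

lemma faulhaberPoly_X_mul (m : ℕ) (x : RatFunc ℚ) :
    faulhaberPoly m (RatFunc.X * x) = RatFunc.X ^ (m + 1) * faulhaberPoly m x +
      (1 - RatFunc.X * x) * ((1 - RatFunc.X) * (1 + RatFunc.X * x) *
        ((1 - RatFunc.X * x) ^ 2) ^ m * qfact (m + 1)) := by
  rw [← sum_faulhaberTerm, mul_sum, faulhaberPoly, faulhaberPoly, mul_sum,
    ← sum_add_distrib]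
  refine sum_congr rfl fun k hk => ?_
  rw [faulhaberTerm, show m + 1 = (m - k) + (k + 1) by grind, pow_add,
    show RatFunc.X - RatFunc.X * x = RatFunc.X * (1 - x) by ring]
  simp only [mul_pow]
  ring

lemma sum_eq_faulhaberPoly_div (m n : ℕ) :
    ∑ k ∈ range (m + 1),
        (-1 : RatFunc ℚ) ^ (m - k) * (qfact k / qfact (m + 1)) * P m (m - k) *
          RatFunc.X ^ ((m - k) * n) * ((qint n * qint (n + 1)) ^ (k + 1) / qint 2) =
      faulhaberPoly m (RatFunc.X ^ n) /
        ((1 - RatFunc.X) ^ (2 * m + 2) * qint 2 * qfact (m + 1)) := by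
  rw [faulhaberPoly, sum_div]
  refine sum_congr rfl fun k hk => ?_
  have hX := one_sub_X_ne_zero
  have h2 := qint_ne_zero two_ne_zero
  have hf := qfact_ne_zero (m + 1)
  rw [qint_mul_qint_succ, show 2 * m + 2 = 2 * (m - k) + 2 * (k + 1) by grind,
    pow_add (1 - _), mul_pow _ (RatFunc.X ^ n), ← pow_mul, ← pow_mul, div_pow, ← pow_mul,
    mul_comm n]
  field_simp

lemma faulhaberPoly_X_pow_succ_div (m n : ℕ) :
    faulhaberPoly m (RatFunc.X ^ (n + 1)) /
        ((1 - RatFunc.X) ^ (2 * m + 2) * qint 2 * qfact (m + 1)) =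
      RatFunc.X ^ (m + 1) * (faulhaberPoly m (RatFunc.X ^ n) /
        ((1 - RatFunc.X) ^ (2 * m + 2) * qint 2 * qfact (m + 1))) +
      qint (2 * (n + 1)) / qint 2 * qint (n + 1) ^ (2 * m) := by
  have hD : (1 - RatFunc.X) ^ (2 * m + 2) * qint 2 * qfact (m + 1) ≠ 0 :=
    mul_ne_zero (mul_ne_zero (pow_ne_zero _ one_sub_X_ne_zero) (qint_ne_zero two_ne_zero))
      (qfact_ne_zero _)
  have h2 := qint_ne_zero two_ne_zero
  have hq : qint (n + 1) ^ (2 * m) * (1 - RatFunc.X) ^ (2 * m) =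
      ((1 - RatFunc.X ^ (n + 1)) ^ 2) ^ m := by
    rw [← mul_pow, qint_mul_one_sub_X, pow_mul]
  have hq2 : qint (2 * (n + 1)) * (1 - RatFunc.X) =
      (1 - RatFunc.X ^ (n + 1)) * (1 + RatFunc.X ^ (n + 1)) := by
    rw [qint_mul_one_sub_X, pow_mul']
    ring
  rw [pow_succ' RatFunc.X n, faulhaberPoly_X_mul, ← pow_succ', add_div, mul_div_assoc,
    add_right_inj, div_eq_iff hD, ← hq]
  linear_combination
    (-(1 - RatFunc.X) ^ (2 * m + 1) * qint (n + 1) ^ (2 * m) * qfact (m + 1)) * hq2 -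
      (qint (2 * (n + 1)) * qint (n + 1) ^ (2 * m) * (1 - RatFunc.X) ^ (2 * m + 2) *
        qfact (m + 1)) * div_self h2

lemma S_succ (m n : ℕ) : S (2 * m + 1) (n + 1) = RatFunc.X ^ (m + 1) * S (2 * m + 1) n +
    qint (2 * (n + 1)) / qint 2 * qint (n + 1) ^ (2 * m) := by
  rw [S, S, sum_Icc_succ_top (by omega), mul_sum, Nat.sub_self, mul_zero, pow_zero, mul_one,
    show (2 * m + 1 + 1) / 2 = m + 1 by omega, show 2 * m + 1 - 1 = 2 * m by omega]
  congr 1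
  refine sum_congr rfl fun k hk => ?_
  rw [show n + 1 - k = (n - k) + 1 by grind, mul_add, pow_add]
  ring

theorem stmt11_general (m n : ℕ) :
    S (2 * m + 1) n =
      ∑ k ∈ range (m + 1),
        (-1 : RatFunc ℚ) ^ (m - k) * (qfact k / qfact (m + 1)) * P m (m - k) *
          RatFunc.X ^ ((m - k) * n) * ((qint n * qint (n + 1)) ^ (k + 1) / qint 2) := by
  rw [sum_eq_faulhaberPoly_div]
  induction n with
  | zero => simp [S, faulhaberPoly]
  | succ n ih => rw [S_succ, ih, faulhaberPoly_X_pow_succ_div]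

/-- Guo and Zeng's `q`-Faulhaber formula, with `P_{m,k}` given by the determinant. -/
theorem stmt11 (m n : ℕ) (hn : 1 ≤ n) :
    S (2 * m + 1) n =
      ∑ k ∈ range (m + 1),
        (-1 : RatFunc ℚ) ^ (m - k) * (qfact k / qfact (m + 1)) * P m (m - k) *
          RatFunc.X ^ ((m - k) * n) * ((qint n * qint (n + 1)) ^ (k + 1) / qint 2) :=
  stmt11_general m n
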